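/- Let μ be a fuzzy submodular measure. If f, g, f∨g, f∧g are all μ-measurable, nonnegative and (ν,μ)-integrable on A ∈ C, then ∫*_A (f∨g) d(ν,μ) + ∫*_A (f∧g) d(ν,μ) ≤ ∫*_A f d(ν,μ) + ∫*_A g d(ν,μ). -/

import Mathlib

/-- Countable (ℕ-indexed) measurable partition of the whole space. -/
def IsCountablePartition {S : Type*} [MeasurableSpace S] (P : ℕ → Set S) : Prop :=
  (∀ n, MeasurableSet (P n)) ∧ Pairwise (Function.onFun Disjoint P) ∧ (⋃ n, P n) = Set.univ

/-- `Q` is finer than `P`: every set of `Q` is included in some set of `P`. -/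
def Finer {S : Type*} (Q P : ℕ → Set S) : Prop := ∀ n, ∃ m, Q n ⊆ P m

/-- `a` is a value of the ν-Riemann–Lebesgue integral of `g` on `S`. -/
def IsRLIntegral {S : Type*} [MeasurableSpace S] {X : Type*} [NormedAddCommGroup X]
    [NormedSpace ℝ X] (ν : Set S → ℝ) (g : S → X) (a : X) : Prop :=
  ∀ ε : ℝ, 0 < ε → ∃ P₀ : ℕ → Set S, IsCountablePartition P₀ ∧
    ∀ P : ℕ → Set S, IsCountablePartition P → Finer P P₀ →
      (∀ n, 0 < ν (P n) → ∃ M, ∀ x ∈ P n, ‖g x‖ ≤ M) ∧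
      ∀ s : ℕ → S, (∀ n, (P n).Nonempty → s n ∈ P n) →
        Summable (fun n => ‖ν (P n) • g (s n)‖) ∧
        ‖(∑' n, ν (P n) • g (s n)) - a‖ < ε

/-- The set of finite sums `Σ ν(Bᵢ)` over finite pairwise disjoint measurable families
of subsets of `B`. -/
def variationSet {S : Type*} [MeasurableSpace S] (ν : Set S → ℝ) (B : Set S) : Set ℝ :=
  {x | ∃ (n : ℕ) (C : Fin n → Set S), (∀ i, MeasurableSet (C i)) ∧ (∀ i, C i ⊆ B) ∧
    Pairwise (Function.onFun Disjoint C) ∧ x = ∑ i, ν (C i)}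

/-- `u_{f,μ}^A(α) = μ({s ∈ A : f s ≥ α})`, as a function on `[0,∞) ≃ ℝ≥0`. -/
def uFn {S : Type*} (μ : Set S → ℝ) (f : S → ℝ) (A : Set S) : NNReal → ℝ :=
  fun α => μ {s | s ∈ A ∧ (α : ℝ) ≤ f s}

/-- `f` is `(ν,μ)`-integrable on `A` with generalized decomposition integral `c`:
`u_{f,μ}^A` is ν-Riemann–Lebesgue integrable on `[0,∞)` with value `c`. -/
def GRLIntegralOn {S : Type*} [MeasurableSpace S] (ν : Set NNReal → ℝ) (μ : Set S → ℝ)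
    (f : S → ℝ) (A : Set S) (c : ℝ) : Prop :=
  IsRLIntegral ν (uFn μ f A) c

/-! The level sets of `f ∨ g` and `f ∧ g` are the union and the intersection of those of `f`
and `g`, so submodularity of `μ` gives `u_{f∨g} + u_{f∧g} ≤ u_f + u_g` pointwise on `[0,∞)`.
The ν-RL integral is additive, and monotone when `ν ≥ 0`, which integrates this inequality. -/

theorem Finer.trans {S : Type*} {R Q P : ℕ → Set S} (hRQ : Finer R Q) (hQP : Finer Q P) :
    Finer R P := fun n =>
  let ⟨m, hm⟩ := hRQ n
  let ⟨k, hk⟩ := hQP m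
  ⟨k, hm.trans hk⟩

theorem IsCountablePartition.exists_common_refinement {S : Type*} [MeasurableSpace S]
    {P Q : ℕ → Set S} (hP : IsCountablePartition P) (hQ : IsCountablePartition Q) :
    ∃ R : ℕ → Set S, IsCountablePartition R ∧ Finer R P ∧ Finer R Q := by
  refine ⟨fun n => P n.unpair.1 ∩ Q n.unpair.2, ⟨fun n => (hP.1 _).inter (hQ.1 _), ?_, ?_⟩,
    fun n => ⟨_, Set.inter_subset_left⟩, fun n => ⟨_, Set.inter_subset_right⟩⟩
  · intro n m hnm
    have hunpair : n.unpair ≠ m.unpair := fun h =>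
      hnm (by rw [← Nat.pair_unpair n, ← Nat.pair_unpair m, h])
    rcases not_and_or.mp (Prod.ext_iff.not.mp hunpair) with h | h
    · exact (hP.2.1 h).mono Set.inter_subset_left Set.inter_subset_left
    · exact (hQ.2.1 h).mono Set.inter_subset_right Set.inter_subset_right
  · refine Set.eq_univ_of_forall fun x => ?_
    obtain ⟨i, hi⟩ := Set.mem_iUnion.mp (hP.2.2.symm ▸ Set.mem_univ x)
    obtain ⟨j, hj⟩ := Set.mem_iUnion.mp (hQ.2.2.symm ▸ Set.mem_univ x)
    exact Set.mem_iUnion.mpr ⟨Nat.pair i j, by simpa only [Nat.unpair_pair] using ⟨hi, hj⟩⟩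

namespace IsRLIntegral

variable {S : Type*} [MeasurableSpace S] {ν : Set S → ℝ}

theorem add {X : Type*} [NormedAddCommGroup X] [NormedSpace ℝ X] [CompleteSpace X]
    {u v : S → X} {a b : X}
    (hu : IsRLIntegral ν u a) (hv : IsRLIntegral ν v b) : IsRLIntegral ν (u + v) (a + b) := by
  intro ε hε
  obtain ⟨P₁, hP₁, hu⟩ := hu (ε / 2) (half_pos hε)
  obtain ⟨P₂, hP₂, hv⟩ := hv (ε / 2) (half_pos hε)
  obtain ⟨R, hR, hR₁, hR₂⟩ := hP₁.exists_common_refinement hP₂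
  refine ⟨R, hR, fun P hP hPR => ⟨fun n hn => ?_, fun s hs => ?_⟩⟩
  · obtain ⟨M₁, hM₁⟩ := (hu P hP (hPR.trans hR₁)).1 n hn
    obtain ⟨M₂, hM₂⟩ := (hv P hP (hPR.trans hR₂)).1 n hn
    exact ⟨M₁ + M₂, fun x hx => (norm_add_le _ _).trans (add_le_add (hM₁ x hx) (hM₂ x hx))⟩
  obtain ⟨hsu, hεu⟩ := (hu P hP (hPR.trans hR₁)).2 s hs
  obtain ⟨hsv, hεv⟩ := (hv P hP (hPR.trans hR₂)).2 s hs
  refine ⟨(hsu.add hsv).of_nonneg_of_le (fun _ => norm_nonneg _) fun n => ?_, ?_⟩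
  · simpa only [Pi.add_apply, smul_add] using norm_add_le _ _
  · simp only [Pi.add_apply, smul_add]
    rw [hsu.of_norm.tsum_add hsv.of_norm, add_sub_add_comm]
    calc _ ≤ _ := norm_add_le _ _
      _ < ε / 2 + ε / 2 := add_lt_add hεu hεv
      _ = ε := add_halves ε

theorem le [Nonempty S] (hν : ∀ E, MeasurableSet E → 0 ≤ ν E) {u v : S → ℝ} {a b : ℝ}
    (huv : ∀ x, u x ≤ v x) (hu : IsRLIntegral ν u a) (hv : IsRLIntegral ν v b) : a ≤ b := by
  refine le_of_forall_pos_le_add fun ε hε => ?_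
  obtain ⟨P₁, hP₁, hu⟩ := hu (ε / 2) (half_pos hε)
  obtain ⟨P₂, hP₂, hv⟩ := hv (ε / 2) (half_pos hε)
  obtain ⟨P, hP, hP₁', hP₂'⟩ := hP₁.exists_common_refinement hP₂
  let s : ℕ → S := fun n => Classical.epsilon (· ∈ P n)
  have hs : ∀ n, (P n).Nonempty → s n ∈ P n := fun n => Classical.epsilon_spec
  obtain ⟨hsu, hεu⟩ := (hu P hP hP₁').2 s hs
  obtain ⟨hsv, hεv⟩ := (hv P hP hP₂').2 s hs
  have hsum : ∑' n, ν (P n) • u (s n) ≤ ∑' n, ν (P n) • v (s n) :=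
    hsu.of_norm.tsum_le_tsum (fun n => mul_le_mul_of_nonneg_left (huv _) (hν _ (hP.1 n)))
      hsv.of_norm
  rw [Real.norm_eq_abs, abs_lt] at hεu hεv
  linarith [hεu.1, hεv.2]

end IsRLIntegral

theorem uFn_max_add_uFn_min_le {S : Type*} {μ : Set S → ℝ}
    (hμ : ∀ B C : Set S, μ (B ∪ C) + μ (B ∩ C) ≤ μ B + μ C) (f g : S → ℝ) (A : Set S)
    (α : NNReal) :
    uFn μ (fun s => max (f s) (g s)) A α + uFn μ (fun s => min (f s) (g s)) A α ≤
      uFn μ f A α + uFn μ g A α := by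
  have hmax : {s | s ∈ A ∧ (α : ℝ) ≤ max (f s) (g s)} =
      {s | s ∈ A ∧ (α : ℝ) ≤ f s} ∪ {s | s ∈ A ∧ (α : ℝ) ≤ g s} := by
    ext s; simp [and_or_left]
  have hmin : {s | s ∈ A ∧ (α : ℝ) ≤ min (f s) (g s)} =
      {s | s ∈ A ∧ (α : ℝ) ≤ f s} ∩ {s | s ∈ A ∧ (α : ℝ) ≤ g s} := by
    ext s; simp only [Set.mem_inter_iff, Set.mem_ofPred_eq, le_min_iff]; tauto
  simp only [uFn, hmax, hmin]
  exact hμ _ _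

theorem grl_submodular_general {S : Type*} [MeasurableSpace S]
    (μ : Set S → ℝ)
    (hμsubmod : ∀ A B : Set S, μ (A ∪ B) + μ (A ∩ B) ≤ μ A + μ B)
    (ν : Set NNReal → ℝ) (hνnn : ∀ E, 0 ≤ ν E)
    (f g : S → ℝ)
    (A : Set S)
    (cf cg cmax cmin : ℝ)
    (hcf : GRLIntegralOn ν μ f A cf) (hcg : GRLIntegralOn ν μ g A cg)
    (hcmax : GRLIntegralOn ν μ (fun s => max (f s) (g s)) A cmax)
    (hcmin : GRLIntegralOn ν μ (fun s => min (f s) (g s)) A cmin) :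
    cmax + cmin ≤ cf + cg :=
  IsRLIntegral.le (fun E _ => hνnn E) (uFn_max_add_uFn_min_le hμsubmod f g A)
    (IsRLIntegral.add hcmax hcmin) (IsRLIntegral.add hcf hcg)

/-- For a fuzzy submodular measure `μ`:
`∫*_A (f∨g) + ∫*_A (f∧g) ≤ ∫*_A f + ∫*_A g`. -/
theorem grl_submodular {S : Type*} [MeasurableSpace S]
    (μ : Set S → ℝ) (hμ0 : μ ∅ = 0) (hμnn : ∀ A, 0 ≤ μ A)
    (hμmono : ∀ A B : Set S, A ⊆ B → μ A ≤ μ B)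
    (hμsubmod : ∀ A B : Set S, μ (A ∪ B) + μ (A ∩ B) ≤ μ A + μ B)
    (ν : Set NNReal → ℝ) (hν0 : ν ∅ = 0) (hνnn : ∀ E, 0 ≤ ν E)
    (f g : S → ℝ) (hf : Measurable f) (hg : Measurable g)
    (hfnn : ∀ s, 0 ≤ f s) (hgnn : ∀ s, 0 ≤ g s)
    (hmax : Measurable fun s => max (f s) (g s))
    (hmin : Measurable fun s => min (f s) (g s))
    (A : Set S) (hA : MeasurableSet A)
    (cf cg cmax cmin : ℝ)
    (hcf : GRLIntegralOn ν μ f A cf) (hcg : GRLIntegralOn ν μ g A cg)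
    (hcmax : GRLIntegralOn ν μ (fun s => max (f s) (g s)) A cmax)
    (hcmin : GRLIntegralOn ν μ (fun s => min (f s) (g s)) A cmin) :
    cmax + cmin ≤ cf + cg :=
  grl_submodular_general μ hμsubmod ν hνnn f g A cf cg cmax cmin hcf hcg hcmax hcmin
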